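/- For a prime p, s ≥ 1, and Witt vectors a, b of length s over a ℤ_(p)[ζ_{p^s}]-algebra, the deformed Artin-Hasse exponential satisfies E_{s,p}(a)·E_{s,p}(b) = E_{s,p}(a + b), where a + b denotes Witt vector addition. -/

import Mathlib

open PowerSeries Classical

/-- Formal exponential `exp f = Σ_n f^n / n!` of a one-variable power series. -/
noncomputable def pexp {K : Type} [Field K] (f : PowerSeries K) : PowerSeries K :=
  PowerSeries.mk fun d =>
    ∑ n ∈ Finset.range (d + 1), PowerSeries.coeff d (f ^ n) / (Nat.factorial n : K)

/-- Substitution `f(a)` of a multivariate power series `a` (with zero constant term) into a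
one-variable power series `f`. -/
noncomputable def substOne {K : Type} [Field K] {σ : Type}
    (a : MvPowerSeries σ K) (f : PowerSeries K) : MvPowerSeries σ K :=
  fun d => ∑ n ∈ Finset.range (d.sum (fun _ k => k) + 1),
    PowerSeries.coeff n f * MvPowerSeries.coeff d (a ^ n)

/-- The one-variable series `E_{j,p}(t) = exp (Σ_{i<j} (ζ_{p^{j-i}} - 1) t^{p^i}/p^i)`,
where the compatible roots of unity are `ζ_{p^r} = ζ^{p^{s-r}}` for a fixed primitive
`p^s`-th root of unity `ζ`. -/
noncomputable def Esingle (p s : ℕ) {K : Type} [Field K] (ζ : K) (j : ℕ) :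
    PowerSeries K :=
  pexp (∑ i ∈ Finset.range j,
    (PowerSeries.monomial (p ^ i)) ((ζ ^ p ^ (s - j + i) - 1) / ((p : K) ^ i)))

/-- The deformed Artin–Hasse exponential on (the first `n` components of) a Witt vector:
`E_{n,p}(a) = Π_{i<n} E_{n-i,p}(a_i)`. -/
noncomputable def EW (p s : ℕ) {K : Type} [Field K] (ζ : K) {σ : Type} (n : ℕ)
    (a : WittVector p (MvPowerSeries σ K)) [Fact p.Prime] : MvPowerSeries σ K :=
  ∏ i ∈ Finset.range n, substOne (a.coeff i) (Esingle p s ζ (n - i))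

/-!
Substituting `a_i` into `E_{s-i,p}` gives `exp (Σ_{k<s-i} (ζ^{p^{i+k}} - 1) a_i^{p^k} / p^k)`, so
`E_{s,p}(a)` is the exponential of a sum which, regrouped by `m = i + k`, is
`Σ_{m<s} (ζ^{p^m} - 1) w_m(a) / p^m` with `w_m(a) = Σ_{i≤m} p^i a_i^{p^{m-i}}` the ghost
components. Ghost components are additive under Witt vector addition, and
`exp (f + g) = exp f · exp g` for power series without constant term.
-/

namespace PowerSeries

variable {R : Type*} [CommRing R] {σ : Type*}

theorem _root_.MvPowerSeries.subst_powerSeries_subst {τ : Type*} {a : MvPowerSeries σ R}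
    (ha : HasSubst a) {b : σ → MvPowerSeries τ R} (hb : MvPowerSeries.HasSubst b)
    (f : R⟦X⟧) : MvPowerSeries.subst b (f.subst a) = f.subst (MvPowerSeries.subst b a) := by
  rw [subst, MvPowerSeries.subst_comp_subst_apply ha.const hb]
  rfl

theorem coeff_subst_eq_sum_range {a : MvPowerSeries σ R} (ha : a.constantCoeff = 0)
    (f : R⟦X⟧) (e : σ →₀ ℕ) :
    MvPowerSeries.coeff e (f.subst a) =
      ∑ n ∈ Finset.range (e.degree + 1), coeff n f * MvPowerSeries.coeff e (a ^ n) := by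
  rw [coeff_subst (HasSubst.of_constantCoeff_zero ha)]
  refine finsum_eq_sum_of_support_subset _ fun n hn => ?_
  rw [Finset.coe_range, Set.mem_Iio, Nat.lt_succ_iff]
  by_contra! hlt
  refine hn ?_
  change coeff n f • MvPowerSeries.coeff e (a ^ n) = 0
  rw [MvPowerSeries.coeff_of_lt_order, smul_zero]
  exact lt_of_lt_of_le (by exact_mod_cast hlt)
    (MvPowerSeries.le_order_pow_of_constantCoeff_eq_zero n ha)

theorem subst_monomial {a : MvPowerSeries σ R} (ha : HasSubst a) (n : ℕ) (c : R) :
    (monomial n c).subst a = MvPowerSeries.C c * a ^ n := by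
  calc (monomial n c).subst a = (c • X ^ n : R⟦X⟧).subst a := by
        rw [X_pow_eq, ← map_smul, smul_eq_mul, mul_one]
    _ = MvPowerSeries.C c * a ^ n := by
        rw [subst_smul ha, subst_pow ha, subst_X ha, MvPowerSeries.smul_eq_C_mul]

variable {A : Type*} [CommRing A] [Algebra ℚ A]

theorem exp_subst_X_zero_add_X_one :
    (exp A).subst (MvPowerSeries.X 0 + MvPowerSeries.X 1 : MvPowerSeries (Fin 2) A) =
      (exp A).subst (MvPowerSeries.X 0 : MvPowerSeries (Fin 2) A) *
        (exp A).subst (MvPowerSeries.X 1 : MvPowerSeries (Fin 2) A) := by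
  ext e
  rw [coeff_subst_X_zero_add_X_one, coeff_subst_X_zero_subst_mul_X_one]
  simp only [coeff_exp, ← map_natCast (algebraMap ℚ A), ← map_mul]
  congr 1
  have := Nat.choose_mul_factorial_mul_factorial (Nat.le_add_right (e 0) (e 1))
  rw [Nat.add_sub_cancel_left] at this
  field_simp
  exact_mod_cast this

theorem exp_subst_add {f g : MvPowerSeries σ A}
    (hf : f.constantCoeff = 0) (hg : g.constantCoeff = 0) :
    (exp A).subst (f + g) = (exp A).subst f * (exp A).subst g := by
  have hfg : MvPowerSeries.HasSubst ![f, g] :=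
    MvPowerSeries.hasSubst_of_constantCoeff_zero (by simp [Fin.forall_fin_two, hf, hg])
  have := congrArg (MvPowerSeries.subst ![f, g]) (exp_subst_X_zero_add_X_one (A := A))
  rwa [MvPowerSeries.subst_mul hfg,
    MvPowerSeries.subst_powerSeries_subst ((HasSubst.X _).add (HasSubst.X _)) hfg,
    MvPowerSeries.subst_powerSeries_subst (HasSubst.X _) hfg,
    MvPowerSeries.subst_powerSeries_subst (HasSubst.X _) hfg,
    MvPowerSeries.subst_add hfg, MvPowerSeries.subst_X hfg, MvPowerSeries.subst_X hfg] at this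

theorem exp_subst_sum {ι : Type*} (t : Finset ι) {f : ι → MvPowerSeries σ A}
    (hf : ∀ i ∈ t, (f i).constantCoeff = 0) :
    (exp A).subst (∑ i ∈ t, f i) = ∏ i ∈ t, (exp A).subst (f i) := by
  induction t using Finset.cons_induction with
  | empty => simp [subst_zero_eq_C_constantCoeff]
  | cons i t hi ih =>
    have ht : ∀ j ∈ t, (f j).constantCoeff = 0 := fun j hj => hf j (Finset.mem_cons_of_mem hj)
    rw [Finset.sum_cons, Finset.prod_cons, exp_subst_add (hf i (Finset.mem_cons_self i t))
      (by rw [map_sum]; exact Finset.sum_eq_zero ht), ih ht]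

end PowerSeries

namespace WittVector

theorem apply_coeff_add_eq_zero {p : ℕ} [Fact p.Prime] {R S : Type*} [CommRing R] [CommRing S]
    (f : R →+* S) {a b : WittVector p R} (ha : ∀ i, f (a.coeff i) = 0)
    (hb : ∀ i, f (b.coeff i) = 0) (i : ℕ) : f ((a + b).coeff i) = 0 := by
  have hmap : ∀ x : WittVector p R, (∀ i, f (x.coeff i) = 0) → map f x = 0 :=
    fun x hx => ext fun n => by rw [map_coeff, hx n, zero_coeff]
  rw [← map_coeff, map_add, hmap a ha, hmap b hb, add_zero, zero_coeff]

end WittVector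

section ArtinHasse

variable {K : Type} [Field K] {σ : Type} (p s : ℕ) [Fact p.Prime] (ζ : K)

theorem substOne_eq_subst {a : MvPowerSeries σ K} (ha : a.constantCoeff = 0) (f : K⟦X⟧) :
    substOne a f = f.subst a := by
  ext e
  rw [coeff_subst_eq_sum_range ha]
  rfl

noncomputable def EWLog (a : WittVector p (MvPowerSeries σ K)) : MvPowerSeries σ K :=
  ∑ m ∈ Finset.range s,
    MvPowerSeries.C ((ζ ^ p ^ m - 1) / (p : K) ^ m) * WittVector.ghostComponent m a

theorem EWLog_add (a b : WittVector p (MvPowerSeries σ K)) :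
    EWLog p s ζ (a + b) = EWLog p s ζ a + EWLog p s ζ b := by
  simp only [EWLog, map_add, mul_add, Finset.sum_add_distrib]

variable [CharZero K]

theorem pexp_eq_exp_subst {f : K⟦X⟧} (hf : f.constantCoeff = 0) : pexp f = (exp K).subst f := by
  ext d
  have h := coeff_subst_eq_sum_range hf (exp K) (Finsupp.single () d)
  rw [Finsupp.degree_single] at h
  rw [pexp, coeff_mk, coeff, h]
  refine Finset.sum_congr rfl fun n _ => ?_
  rw [coeff_exp, div_eq_inv_mul]
  simp

theorem substOne_Esingle (j : ℕ) {x : MvPowerSeries σ K} (hx : x.constantCoeff = 0) :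
    substOne x (Esingle p s ζ j) = (exp K).subst (∑ k ∈ Finset.range j,
      MvPowerSeries.C ((ζ ^ p ^ (s - j + k) - 1) / (p : K) ^ k) * x ^ p ^ k) := by
  have hg : constantCoeff (∑ k ∈ Finset.range j,
      monomial (p ^ k) ((ζ ^ p ^ (s - j + k) - 1) / (p : K) ^ k)) = 0 := by
    have hp : p ≠ 0 := (Fact.out : p.Prime).ne_zero
    simp [map_sum, ← coeff_zero_eq_constantCoeff_apply, coeff_monomial, eq_comm (a := 0), hp]
  have hx' := HasSubst.of_constantCoeff_zero hx
  rw [substOne_eq_subst hx, Esingle, pexp_eq_exp_subst hg,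
    subst_comp_subst_apply (HasSubst.of_constantCoeff_zero' hg) hx', ← coe_substAlgHom hx',
    map_sum]
  simp only [coe_substAlgHom, subst_monomial hx']

theorem EWLog_eq_sum (a : WittVector p (MvPowerSeries σ K)) :
    EWLog p s ζ a = ∑ i ∈ Finset.range s, ∑ k ∈ Finset.range (s - i),
      MvPowerSeries.C ((ζ ^ p ^ (i + k) - 1) / (p : K) ^ k) * a.coeff i ^ p ^ k := by
  have hp : (p : K) ≠ 0 := Nat.cast_ne_zero.mpr (Fact.out : p.Prime).ne_zero
  simp only [EWLog, WittVector.ghostComponent_apply, aeval_wittPolynomial, Finset.mul_sum]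
  rw [← Finset.sum_range_diag_flip]
  refine Finset.sum_congr rfl fun m _ => Finset.sum_congr rfl fun i hi => ?_
  obtain ⟨k, rfl⟩ := Nat.exists_eq_add_of_le (Nat.lt_succ_iff.mp (Finset.mem_range.mp hi))
  rw [Nat.add_sub_cancel_left, ← map_natCast MvPowerSeries.C, ← map_pow, ← mul_assoc, ← map_mul]
  congr 2
  field_simp
  ring

variable {p s ζ}

theorem constantCoeff_EWLog {a : WittVector p (MvPowerSeries σ K)}
    (ha : ∀ i, (a.coeff i).constantCoeff = 0) : (EWLog p s ζ a).constantCoeff = 0 := by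
  have hp : p ≠ 0 := (Fact.out : p.Prime).ne_zero
  simp [EWLog_eq_sum, ha, hp]

theorem EW_eq_exp_subst_EWLog {a : WittVector p (MvPowerSeries σ K)}
    (ha : ∀ i, (a.coeff i).constantCoeff = 0) : EW p s ζ s a = (exp K).subst (EWLog p s ζ a) := by
  have hp : p ≠ 0 := (Fact.out : p.Prime).ne_zero
  rw [EWLog_eq_sum, exp_subst_sum _ (fun i _ => by simp [ha, hp]), EW]
  refine Finset.prod_congr rfl fun i hi => ?_
  rw [substOne_Esingle p s ζ _ (ha i), Nat.sub_sub_self (Finset.mem_range.1 hi).le]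

theorem EW_mul_EW {a b : WittVector p (MvPowerSeries σ K)}
    (ha : ∀ i, (a.coeff i).constantCoeff = 0) (hb : ∀ i, (b.coeff i).constantCoeff = 0) :
    EW p s ζ s a * EW p s ζ s b = EW p s ζ s (a + b) := by
  have hab :=
    WittVector.apply_coeff_add_eq_zero (MvPowerSeries.constantCoeff (σ := σ) (R := K)) ha hb
  rw [EW_eq_exp_subst_EWLog ha, EW_eq_exp_subst_EWLog hb, EW_eq_exp_subst_EWLog hab, EWLog_add,
    exp_subst_add (constantCoeff_EWLog ha) (constantCoeff_EWLog hb)]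

end ArtinHasse

theorem stmt_6_general (p s : ℕ) [Fact p.Prime] (K : Type) [Field K] [CharZero K]
    (ζ : K) :
    ∀ a b : WittVector p (MvPowerSeries (Fin 2 × ℕ) K),
      a = WittVector.mk p (fun i => MvPowerSeries.X (0, i)) →
      b = WittVector.mk p (fun i => MvPowerSeries.X (1, i)) →
      EW p s ζ s a * EW p s ζ s b = EW p s ζ s (a + b) := by
  rintro a b rfl rfl
  exact EW_mul_EW (fun i => by simp) (fun i => by simp)

/-- For Witt vectors `a`, `b` of length `s` (with independent variable entries, so that the
identity is one of formal power series in the entries), the deformed Artin–Hasse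
exponential satisfies `E_{s,p}(a) · E_{s,p}(b) = E_{s,p}(a + b)`, where `a + b` is Witt
vector addition. -/
theorem stmt_6 (p s : ℕ) [Fact p.Prime] (hs : 1 ≤ s) (K : Type) [Field K] [CharZero K]
    (ζ : K) (hζ : IsPrimitiveRoot ζ (p ^ s)) :
    ∀ a b : WittVector p (MvPowerSeries (Fin 2 × ℕ) K),
      a = WittVector.mk p (fun i => MvPowerSeries.X (0, i)) →
      b = WittVector.mk p (fun i => MvPowerSeries.X (1, i)) →
      EW p s ζ s a * EW p s ζ s b = EW p s ζ s (a + b) :=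
  stmt_6_general p s K ζ
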